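/- arXiv:2204.06600 — 6 statements merged into one kernel-verified Lean document; each statement's English description precedes it below -/
import Mathlib

section
/- Let θ̃ : K → ℝ be any function and define x : ℕ^J × K → ℝ by x(n,k) := ξ̃(n)·θ̃(k). Then for every state (n,k) ∈ ℕ^J × K, the global balance equation holds at (n,k) if and only if the reduced balance equation holds at k. In particular, x satisfies the global balance equations (at every state) if and only if θ̃ satisfies the reduced balance equations (at every k ∈ K). -/
open Finset

/-- `k + e_i`: add one unit in coordinate `i`. -/
def addE {J : ℕ} (k : Fin J → ℕ) (i : Fin J) : Fin J → ℕ :=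
  Function.update k i (k i + 1)

/-- `k - e_i`: remove one unit in coordinate `i`. -/
def subE {J : ℕ} (k : Fin J → ℕ) (i : Fin J) : Fin J → ℕ :=
  Function.update k i (k i - 1)

/-- The set `M(k)` of locations attaining the maximal difference `b_i - k_i`. -/
def Mset {J : ℕ} (b k : Fin J → ℕ) : Finset (Fin J) :=
  Finset.univ.filter (fun i => b i - k i = Finset.univ.sup (fun j => b j - k j))

/-- Routing probability `p_i(k)` (strict load balancing policy). -/
noncomputable def routeP {J : ℕ} (b k : Fin J → ℕ) (i : Fin J) : ℝ :=
  if i ∈ Mset b k then 1 / ((Mset b k).card : ℝ) else 0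

/-- The inventory state space `K = {k : 0 ≤ k_j ≤ b_j}` as a `Finset`. -/
def Kfin {J : ℕ} (b : Fin J → ℕ) : Finset (Fin J → ℕ) :=
  Fintype.piFinset fun j => Finset.range (b j + 1)

/-- The reduced balance equation at a single state `k`. -/
def RBEat {J : ℕ} (lam : Fin J → ℝ) (b : Fin J → ℕ) (ν : ℝ)
    (θ : (Fin J → ℕ) → ℝ) (k : Fin J → ℕ) : Prop :=
  θ k * ((∑ i ∈ Finset.univ.filter (fun i => 0 < k i), lam i)
      + ∑ i ∈ Finset.univ.filter (fun i => k i < b i), ν * routeP b k i)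
    = (∑ i ∈ Finset.univ.filter (fun i => k i < b i), θ (addE k i) * lam i)
      + ∑ i ∈ Finset.univ.filter (fun i => 0 < k i),
          θ (subE k i) * ν * routeP b (subE k i) i

/-- `θ` satisfies the reduced balance equations (at every `k ∈ K`). -/
def ReducedBalance {J : ℕ} (lam : Fin J → ℝ) (b : Fin J → ℕ) (ν : ℝ)
    (θ : (Fin J → ℕ) → ℝ) : Prop :=
  ∀ k : Fin J → ℕ, (∀ j, k j ≤ b j) → RBEat lam b ν θ k

/-- The global balance equation at a single state `(n, k)`. -/
def GBEat {J : ℕ} (lam : Fin J → ℝ) (b : Fin J → ℕ) (μ : Fin J → ℕ → ℝ) (ν : ℝ)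
    (x : (Fin J → ℕ) → (Fin J → ℕ) → ℝ) (n k : Fin J → ℕ) : Prop :=
  x n k * ((∑ i ∈ Finset.univ.filter (fun i => 0 < k i), lam i)
      + (∑ i ∈ Finset.univ.filter (fun i => 0 < n i ∧ 0 < k i), μ i (n i))
      + ∑ i ∈ Finset.univ.filter (fun i => k i < b i), ν * routeP b k i)
    = (∑ i ∈ Finset.univ.filter (fun i => 0 < n i ∧ 0 < k i), x (subE n i) k * lam i)
      + (∑ i ∈ Finset.univ.filter (fun i => k i < b i),
          x (addE n i) (addE k i) * μ i (n i + 1))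
      + ∑ i ∈ Finset.univ.filter (fun i => 0 < k i),
          x n (subE k i) * ν * routeP b (subE k i) i

/-- `x` satisfies the global balance equations (at every `(n,k) ∈ ℕ^J × K`). -/
def GlobalBalance {J : ℕ} (lam : Fin J → ℝ) (b : Fin J → ℕ) (μ : Fin J → ℕ → ℝ)
    (ν : ℝ) (x : (Fin J → ℕ) → (Fin J → ℕ) → ℝ) : Prop :=
  ∀ n k : Fin J → ℕ, (∀ j, k j ≤ b j) → GBEat lam b μ ν x n k

/-- `ξ̃_j(n) = ∏_{ℓ=1}^n λ_j / μ_j(ℓ)`. -/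
noncomputable def xiT {J : ℕ} (lam : Fin J → ℝ) (μ : Fin J → ℕ → ℝ)
    (j : Fin J) (n : ℕ) : ℝ :=
  ∏ l ∈ Finset.Icc 1 n, lam j / μ j l

/-- `ξ̃(n) = ∏_j ξ̃_j(n_j)`. -/
noncomputable def xiTvec {J : ℕ} (lam : Fin J → ℝ) (μ : Fin J → ℕ → ℝ)
    (n : Fin J → ℕ) : ℝ :=
  ∏ j, xiT lam μ j (n j)

/-- The transition rates `q_red` of the reduced (inventory-replenishment) process. -/
noncomputable def qred {J : ℕ} (lam : Fin J → ℝ) (b : Fin J → ℕ) (ν : ℝ)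
    (k k' : Fin J → ℕ) : ℝ :=
  (∑ i : Fin J, (if 0 < k i ∧ k' = subE k i then lam i else 0))
    + ∑ i : Fin J, (if k i < b i ∧ k' = addE k i then ν * routeP b k i else 0)

/-- The candidate stationary measure for base stock levels all equal to one. -/
noncomputable def thetaOne {J : ℕ} (lam : Fin J → ℝ) (ν : ℝ)
    (k : Fin J → ℕ) : ℝ :=
  (∏ l ∈ Finset.range (∑ j, k j), 1 / ((J : ℝ) - (l : ℝ)))
    * (∏ j, (1 / lam j) ^ (k j)) * (1 / ν) ^ (J - ∑ j, k j)

section Aux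

variable {J : ℕ} {lam : Fin J → ℝ} {μ : Fin J → ℕ → ℝ}

lemma xiT_pos (hlam : ∀ j, 0 < lam j) (hμ : ∀ j n, 1 ≤ n → 0 < μ j n)
    (j : Fin J) (m : ℕ) : 0 < xiT lam μ j m := by
  refine Finset.prod_pos fun l hl => div_pos (hlam j) (hμ j l ?_)
  exact (Finset.mem_Icc.1 hl).1

lemma xiTvec_pos (hlam : ∀ j, 0 < lam j) (hμ : ∀ j n, 1 ≤ n → 0 < μ j n)
    (n : Fin J → ℕ) : 0 < xiTvec lam μ n :=
  Finset.prod_pos fun j _ => xiT_pos hlam hμ j (n j)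

lemma xiT_succ (j : Fin J) (m : ℕ) :
    xiT lam μ j (m + 1) = xiT lam μ j m * (lam j / μ j (m + 1)) := by
  unfold xiT
  exact Finset.prod_Icc_succ_top (Nat.le_add_left 1 m) _

lemma xiTvec_update (n : Fin J → ℕ) (i : Fin J) (v : ℕ) :
    xiTvec lam μ (Function.update n i v)
      = xiT lam μ i v * ∏ j ∈ Finset.univ.erase i, xiT lam μ j (n j) := by
  unfold xiTvec
  rw [← Finset.mul_prod_erase Finset.univ
      (fun j => xiT lam μ j (Function.update n i v j)) (Finset.mem_univ i)]
  congr 1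
  · simp
  · exact Finset.prod_congr rfl fun j hj => by
      rw [Function.update_of_ne (Finset.ne_of_mem_erase hj)]

lemma xiTvec_eq (n : Fin J → ℕ) (i : Fin J) :
    xiTvec lam μ n = xiT lam μ i (n i) * ∏ j ∈ Finset.univ.erase i, xiT lam μ j (n j) :=
  Finset.mul_prod_erase Finset.univ _ (Finset.mem_univ i) |>.symm

lemma xiTvec_add_id (hμ : ∀ j n, 1 ≤ n → 0 < μ j n) (n : Fin J → ℕ) (i : Fin J) :
    xiTvec lam μ (addE n i) * μ i (n i + 1) = xiTvec lam μ n * lam i := by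
  have hμne : μ i (n i + 1) ≠ 0 := ne_of_gt (hμ i _ (Nat.le_add_left 1 _))
  rw [addE, xiTvec_update, xiTvec_eq n i, xiT_succ]
  field_simp

lemma xiTvec_sub_id (hμ : ∀ j n, 1 ≤ n → 0 < μ j n) (n : Fin J → ℕ) (i : Fin J)
    (h : 0 < n i) :
    xiTvec lam μ (subE n i) * lam i = xiTvec lam μ n * μ i (n i) := by
  obtain ⟨m, hm⟩ := Nat.exists_eq_add_of_lt h
  rw [zero_add] at hm
  have hμne : μ i (m + 1) ≠ 0 := ne_of_gt (hμ i _ (Nat.le_add_left 1 _))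
  rw [subE, xiTvec_update, xiTvec_eq n i, hm]
  simp only [Nat.add_sub_cancel, xiT_succ]
  field_simp

end Aux

/-- with `x(n,k) := ξ̃(n)·θ̃(k)`, the global balance equation holds at
`(n,k)` iff the reduced balance equation holds at `k`; in particular `x` satisfies
the global balance equations iff `θ̃` satisfies the reduced balance equations. -/
theorem global_balance_iff_reduced_balance
    (J : ℕ) (hJ : 1 < J) (lam : Fin J → ℝ) (hlam : ∀ j, 0 < lam j)
    (b : Fin J → ℕ) (hb : ∀ j, 1 ≤ b j)
    (μ : Fin J → ℕ → ℝ) (hμ : ∀ j n, 1 ≤ n → 0 < μ j n)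
    (ν : ℝ) (hν : 0 < ν)
    (θ : (Fin J → ℕ) → ℝ)
    (x : (Fin J → ℕ) → (Fin J → ℕ) → ℝ)
    (hx : ∀ n k, x n k = xiTvec lam μ n * θ k) :
    (∀ n k : Fin J → ℕ, (∀ j, k j ≤ b j) →
        (GBEat lam b μ ν x n k ↔ RBEat lam b ν θ k)) ∧
      (GlobalBalance lam b μ ν x ↔ ReducedBalance lam b ν θ) := by
  have main : ∀ n k : Fin J → ℕ, (∀ j, k j ≤ b j) →
      (GBEat lam b μ ν x n k ↔ RBEat lam b ν θ k) := by
    intro n k _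
    have hxi : xiTvec lam μ n ≠ 0 := ne_of_gt (xiTvec_pos hlam hμ n)
    unfold GBEat RBEat
    rw [hx n k]
    have h1 : ∑ i ∈ Finset.univ.filter (fun i => 0 < n i ∧ 0 < k i),
        x (subE n i) k * lam i
        = xiTvec lam μ n * ∑ i ∈ Finset.univ.filter (fun i => 0 < n i ∧ 0 < k i),
            θ k * μ i (n i) := by
      rw [Finset.mul_sum]
      refine Finset.sum_congr rfl fun i hi => ?_
      rw [hx]
      have hsub := xiTvec_sub_id (lam := lam) hμ n i (Finset.mem_filter.1 hi).2.1
      linear_combination θ k * hsub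
    have h2 : ∑ i ∈ Finset.univ.filter (fun i => k i < b i),
        x (addE n i) (addE k i) * μ i (n i + 1)
        = xiTvec lam μ n * ∑ i ∈ Finset.univ.filter (fun i => k i < b i),
            θ (addE k i) * lam i := by
      rw [Finset.mul_sum]
      refine Finset.sum_congr rfl fun i _ => ?_
      rw [hx]
      have hadd := xiTvec_add_id (lam := lam) hμ n i
      linear_combination θ (addE k i) * hadd
    have h3 : ∑ i ∈ Finset.univ.filter (fun i => 0 < k i),
        x n (subE k i) * ν * routeP b (subE k i) i
        = xiTvec lam μ n * ∑ i ∈ Finset.univ.filter (fun i => 0 < k i),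
            θ (subE k i) * ν * routeP b (subE k i) i := by
      rw [Finset.mul_sum]
      refine Finset.sum_congr rfl fun i _ => ?_
      rw [hx]
      ring
    rw [h1, h2, h3, ← Finset.mul_sum (Finset.univ.filter (fun i => 0 < n i ∧ 0 < k i))
        (fun i => μ i (n i)) (θ k)]
    constructor
    · intro h
      exact mul_left_cancel₀ hxi (by linear_combination h)
    · intro h
      linear_combination (xiTvec lam μ n) * h
  refine ⟨main, ⟨fun hg k hk => (main (fun _ => 0) k hk).1 (hg _ k hk),
    fun hr n k hk => (main n k hk).2 (hr k hk)⟩⟩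
end

section
/- There exists a strictly positive function θ̃ : K → ℝ (θ̃(k) > 0 for all k ∈ K) satisfying the reduced balance equations; moreover this solution is unique up to a multiplicative constant: if θ₁ and θ₂ are two nonzero solutions of the reduced balance equations, then θ₂ = c·θ₁ for some constant c ∈ ℝ. -/
open Finset

open Matrix Relation

/-!
On the finite state space `K` the reduced balance equations say `θ Q = 0`, where `Q` is the
generator of the inventory chain with rates `qred`. Rows of `Q` sum to zero, so `det Q = 0` and a
nonzero solution exists. If `θ` is a solution then so is `|θ|`: at every state the outflow of `|θ|`
is at most its inflow by the triangle inequality, and both have the same total. A nonnegative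
solution vanishing at `k` vanishes at every state with a jump into `k`; since the chain is
irreducible (load-balanced replenishment leads from any state up to `b`, demand leads from `b` down
to any state), a nonnegative solution is positive or zero. Applied to `|θ| + θ` and `-θ`, this
shows that a nonzero solution has constant strict sign. That gives the positive solution, and
uniqueness follows because `θ₂ - c θ₁` can be made to vanish at one state.
-/

theorem Finset.sum_ite_eq_of_iff {α M : Type*} [AddCommMonoid M] {s : Finset α} {p : α → Prop}
    [DecidablePred p] {c : Prop} [Decidable c] {a : α} (f : α → M)
    (hp : ∀ x ∈ s, p x ↔ c ∧ x = a) (ha : c → a ∈ s) :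
    ∑ x ∈ s, (if p x then f x else 0) = if c then f a else 0 := by
  split_ifs with hc
  · rw [sum_eq_single_of_mem a (ha hc) fun x hx hxa => by simp [hp x hx, hxa]]
    simp [hp a (ha hc), hc]
  · exact sum_eq_zero fun x hx => by simp [hp x hx, hc]

section RateGenerator

variable {R : Type*} [CommRing R] {S : Type*} [Fintype S] [DecidableEq S]

def rateGenerator (q : S → S → R) : Matrix S S R :=
  of q - diagonal fun k => ∑ k', q k k'

def balanceSolutions (q : S → S → R) : Submodule R (S → R) :=
  LinearMap.ker (rateGenerator q).vecMulLinear

theorem mem_balanceSolutions {q : S → S → R} {θ : S → R} :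
    θ ∈ balanceSolutions q ↔ ∀ k, θ k * ∑ k', q k k' = ∑ k', θ k' * q k' k := by
  simp only [balanceSolutions, LinearMap.mem_ker, vecMulLinear_apply, rateGenerator,
    vecMul_sub, vecMul_diagonal, funext_iff, sub_eq_zero]
  exact forall_congr' fun k => eq_comm

theorem rateGenerator_mulVec_one (q : S → S → R) : rateGenerator q *ᵥ (fun _ => 1) = 0 := by
  ext k
  simp only [rateGenerator, sub_mulVec, Pi.sub_apply, mulVec_diagonal, mul_one, Pi.zero_apply,
    sub_eq_zero]
  simp [mulVec, dotProduct]

end RateGenerator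

section BalanceSolutions

variable {𝕜 : Type*} [Field 𝕜] [LinearOrder 𝕜] [IsStrictOrderedRing 𝕜]
  {S : Type*} [Fintype S] [DecidableEq S] {q : S → S → 𝕜}

variable (hq : ∀ k k', 0 ≤ q k k')
include hq

theorem abs_mem_balanceSolutions {θ : S → 𝕜} (hθ : θ ∈ balanceSolutions q) :
    |θ| ∈ balanceSolutions q := by
  rw [mem_balanceSolutions] at hθ ⊢
  set defect : S → 𝕜 := fun k => ∑ k', |θ k'| * q k' k - |θ k| * ∑ k', q k k'
  have defect_nonneg : ∀ k, 0 ≤ defect k := fun k => by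
    have hout : 0 ≤ ∑ k', q k k' := sum_nonneg fun k' _ => hq k k'
    refine sub_nonneg.2 ?_
    calc |θ k| * ∑ k', q k k' = |∑ k', θ k' * q k' k| := by
          rw [← hθ k, abs_mul, abs_of_nonneg hout]
      _ ≤ ∑ k', |θ k' * q k' k| := abs_sum_le_sum_abs _ _
      _ = ∑ k', |θ k'| * q k' k := by simp_rw [abs_mul, abs_of_nonneg (hq _ k)]
  have defect_sum : ∑ k, defect k = 0 := by
    simp only [defect, sum_sub_distrib, mul_sum]
    rw [sum_comm, sub_self]
  intro k
  have := (sum_eq_zero_iff_of_nonneg fun k _ => defect_nonneg k).1 defect_sum k (mem_univ k)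
  simp only [defect, sub_eq_zero] at this
  simpa using this.symm

theorem eq_zero_of_reflTransGen {θ : S → 𝕜} (hθ : θ ∈ balanceSolutions q) (hθ0 : 0 ≤ θ)
    {k k' : S} (hk : θ k = 0) (hreach : ReflTransGen (fun a c => 0 < q a c) k' k) :
    θ k' = 0 := by
  induction hreach using ReflTransGen.head_induction_on with
  | refl => exact hk
  | @head a c hac _ hc =>
    have hin : ∑ k', θ k' * q k' c = 0 := by rw [← mem_balanceSolutions.1 hθ c, hc, zero_mul]
    rw [sum_eq_zero_iff_of_nonneg fun k' _ => mul_nonneg (hθ0 k') (hq k' c)] at hin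
    exact (mul_eq_zero.1 (hin a (mem_univ a))).resolve_right hac.ne'

variable (hirr : ∀ k k', ReflTransGen (fun a c => 0 < q a c) k k')
include hirr

theorem pos_or_eq_zero_of_nonneg {θ : S → 𝕜} (hθ : θ ∈ balanceSolutions q) (hθ0 : 0 ≤ θ) :
    (∀ k, 0 < θ k) ∨ θ = 0 := by
  by_cases h : ∃ k, θ k = 0
  · obtain ⟨k, hk⟩ := h
    exact Or.inr <| funext fun k' => eq_zero_of_reflTransGen hq hθ hθ0 hk (hirr k' k)
  · push Not at h
    exact Or.inl fun k => (hθ0 k).lt_of_ne (h k).symm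

theorem pos_or_neg_of_ne_zero {θ : S → 𝕜} (hθ : θ ∈ balanceSolutions q) (hθ0 : θ ≠ 0) :
    (∀ k, 0 < θ k) ∨ ∀ k, θ k < 0 := by
  have hpos_part : |θ| + θ ∈ balanceSolutions q := add_mem (abs_mem_balanceSolutions hq hθ) hθ
  rcases pos_or_eq_zero_of_nonneg hq hirr hpos_part fun k => by simp [add_comm, add_abs_nonneg]
    with h | h
  · exact Or.inl fun k => by
      have := h k
      simp only [Pi.add_apply, Pi.abs_apply] at this
      cases abs_cases (θ k) <;> linarith
  · have hnonpos : ∀ k, θ k ≤ 0 := fun k => by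
      have := congrFun h k
      simp only [Pi.add_apply, Pi.abs_apply, Pi.zero_apply] at this
      linarith [abs_nonneg (θ k)]
    rcases pos_or_eq_zero_of_nonneg hq hirr (neg_mem hθ) fun k => by simpa using hnonpos k
      with h' | h'
    · exact Or.inr fun k => by simpa using h' k
    · exact absurd (neg_eq_zero.1 h') hθ0

theorem exists_pos_mem_balanceSolutions [Nonempty S] :
    ∃ θ ∈ balanceSolutions q, ∀ k, 0 < θ k := by
  have hdet : (rateGenerator q).det = 0 :=
    exists_mulVec_eq_zero_iff.1 ⟨_, fun h => one_ne_zero (congrFun h (Classical.arbitrary S)),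
      rateGenerator_mulVec_one q⟩
  obtain ⟨θ, hθ0, hθ⟩ := exists_vecMul_eq_zero_iff.2 hdet
  have hmem : θ ∈ balanceSolutions q := hθ
  rcases pos_or_neg_of_ne_zero hq hirr hmem hθ0 with h | h
  · exact ⟨θ, hmem, h⟩
  · exact ⟨-θ, neg_mem hmem, fun k => neg_pos.2 (h k)⟩

theorem eq_smul_of_mem_balanceSolutions {θ₁ θ₂ : S → 𝕜} (h₁ : θ₁ ∈ balanceSolutions q)
    (h₁0 : θ₁ ≠ 0) (h₂ : θ₂ ∈ balanceSolutions q) : ∃ c : 𝕜, θ₂ = c • θ₁ := by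
  obtain ⟨k₀, hk₀⟩ : ∃ k, θ₁ k ≠ 0 := Function.ne_iff.1 h₁0
  refine ⟨θ₂ k₀ / θ₁ k₀, sub_eq_zero.1 (by_contra fun hne => ?_)⟩
  have hzero : (θ₂ - (θ₂ k₀ / θ₁ k₀) • θ₁) k₀ = 0 := by simp [div_mul_cancel₀ _ hk₀]
  rcases pos_or_neg_of_ne_zero hq hirr (sub_mem h₂ (Submodule.smul_mem _ _ h₁)) hne with h | h
  · exact (h k₀).ne' hzero
  · exact (h k₀).ne hzero

end BalanceSolutions

section InventoryChain

variable {J : ℕ}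

@[simp] theorem addE_self (k : Fin J → ℕ) (i : Fin J) : addE k i i = k i + 1 := by simp [addE]

@[simp] theorem subE_self (k : Fin J → ℕ) (i : Fin J) : subE k i i = k i - 1 := by simp [subE]

theorem le_addE (k : Fin J → ℕ) (i : Fin J) : k ≤ addE k i := by
  intro j
  by_cases h : j = i
  · subst h; simp
  · simp [addE, h]

@[simp] theorem subE_addE (k : Fin J → ℕ) (i : Fin J) : subE (addE k i) i = k := by
  simp [addE, subE]

theorem addE_subE {k : Fin J → ℕ} {i : Fin J} (h : 0 < k i) : addE (subE k i) i = k := by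
  simp [addE, subE, Nat.sub_add_cancel h]

theorem pos_and_eq_subE_iff {b x y : Fin J → ℕ} {i : Fin J} (hx : x i ≤ b i) :
    (0 < x i ∧ y = subE x i) ↔ (y i < b i ∧ x = addE y i) := by
  constructor
  · rintro ⟨hpos, rfl⟩
    exact ⟨by simp; omega, (addE_subE hpos).symm⟩
  · rintro ⟨-, rfl⟩
    simp

theorem mem_Kfin {b k : Fin J → ℕ} : k ∈ Kfin b ↔ ∀ j, k j ≤ b j := by
  simp [Kfin]

theorem self_mem_Kfin (b : Fin J → ℕ) : b ∈ Kfin b := mem_Kfin.2 fun _ => le_rfl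

instance (b : Fin J → ℕ) : Nonempty (Kfin b) := ⟨⟨b, self_mem_Kfin b⟩⟩

theorem addE_mem_Kfin {b k : Fin J → ℕ} (hk : k ∈ Kfin b) {i : Fin J} (hi : k i < b i) :
    addE k i ∈ Kfin b := by
  rw [mem_Kfin] at hk ⊢
  intro j
  by_cases h : j = i
  · subst h; simpa using hi
  · simpa [addE, h] using hk j

theorem subE_mem_Kfin {b k : Fin J → ℕ} (hk : k ∈ Kfin b) (i : Fin J) : subE k i ∈ Kfin b := by
  rw [mem_Kfin] at hk ⊢
  intro j
  by_cases h : j = i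
  · subst h; simpa using (Nat.sub_le _ _).trans (hk j)
  · simpa [subE, h] using hk j

theorem exists_mem_Mset_lt {b k : Fin J → ℕ} (hk : ∀ j, k j ≤ b j) (hne : k ≠ b) :
    ∃ i ∈ Mset b k, k i < b i := by
  obtain ⟨j, hj⟩ : ∃ j, k j < b j := by
    by_contra! h
    exact hne (funext fun j => (hk j).antisymm (h j))
  obtain ⟨i, -, hi⟩ := exists_mem_eq_sup univ ⟨j, mem_univ j⟩ fun j => b j - k j
  have hji : b j - k j ≤ b i - k i := hi ▸ le_sup (f := fun j => b j - k j) (mem_univ j)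
  exact ⟨i, by simp [Mset, hi], by omega⟩

theorem sum_sub_addE_lt {b k : Fin J → ℕ} {i : Fin J} (hik : k i < b i) :
    ∑ j, (b j - addE k i j) < ∑ j, (b j - k j) :=
  sum_lt_sum (fun j _ => Nat.sub_le_sub_left (le_addE k i j) _)
    ⟨i, mem_univ i, by simp; omega⟩

theorem routeP_nonneg (b k : Fin J → ℕ) (i : Fin J) : 0 ≤ routeP b k i := by
  unfold routeP; split_ifs <;> positivity

theorem routeP_pos {b k : Fin J → ℕ} {i : Fin J} (hi : i ∈ Mset b k) : 0 < routeP b k i := by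
  have : 0 < (Mset b k).card := card_pos.2 ⟨i, hi⟩
  simp only [routeP, if_pos hi]
  positivity

variable {lam : Fin J → ℝ} {b : Fin J → ℕ} {ν : ℝ}

theorem sum_qred_left {k : Fin J → ℕ} (hk : k ∈ Kfin b) :
    ∑ k' ∈ Kfin b, qred lam b ν k k' =
      (∑ i ∈ univ.filter (fun i => 0 < k i), lam i)
        + ∑ i ∈ univ.filter (fun i => k i < b i), ν * routeP b k i := by
  simp only [qred, sum_add_distrib, sum_filter]
  rw [sum_comm, sum_comm (s := Kfin b)]
  congr 1
  · exact sum_congr rfl fun i _ =>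
      sum_ite_eq_of_iff _ (fun _ _ => Iff.rfl) fun _ => subE_mem_Kfin hk i
  · exact sum_congr rfl fun i _ => sum_ite_eq_of_iff _ (fun _ _ => Iff.rfl) (addE_mem_Kfin hk)

theorem sum_mul_qred_right (θ : (Fin J → ℕ) → ℝ) {k : Fin J → ℕ} (hk : k ∈ Kfin b) :
    ∑ k' ∈ Kfin b, θ k' * qred lam b ν k' k =
      (∑ i ∈ univ.filter (fun i => k i < b i), θ (addE k i) * lam i)
        + ∑ i ∈ univ.filter (fun i => 0 < k i),
            θ (subE k i) * ν * routeP b (subE k i) i := by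
  simp only [qred, mul_add, mul_sum, mul_ite, mul_zero, sum_add_distrib, sum_filter]
  rw [sum_comm, sum_comm (s := Kfin b)]
  congr 1
  · exact sum_congr rfl fun i _ => sum_ite_eq_of_iff _
      (fun _ hk' => pos_and_eq_subE_iff (mem_Kfin.1 hk' i)) (addE_mem_Kfin hk)
  · refine sum_congr rfl fun i _ => ?_
    rw [sum_ite_eq_of_iff _ (fun _ _ => (pos_and_eq_subE_iff (mem_Kfin.1 hk i)).symm)
      fun _ => subE_mem_Kfin hk i]
    simp only [mul_assoc]

noncomputable def qredOnK (lam : Fin J → ℝ) (b : Fin J → ℕ) (ν : ℝ) : Kfin b → Kfin b → ℝ :=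
  fun k k' => qred lam b ν k k'

theorem reducedBalance_iff {θ : (Fin J → ℕ) → ℝ} :
    ReducedBalance lam b ν θ ↔ (Kfin b).restrict θ ∈ balanceSolutions (qredOnK lam b ν) := by
  simp only [mem_balanceSolutions, ReducedBalance, RBEat, qredOnK, Finset.restrict,
    Subtype.forall, ← mem_Kfin]
  refine forall₂_congr fun k hk => ?_
  rw [sum_coe_sort (Kfin b) (qred lam b ν k),
    sum_coe_sort (Kfin b) fun k' => θ k' * qred lam b ν k' k, sum_qred_left hk,
    sum_mul_qred_right θ hk]

section

variable (hlam : ∀ j, 0 < lam j) (hν : 0 < ν)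
include hlam hν

theorem qred_nonneg (k k' : Fin J → ℕ) : 0 ≤ qred lam b ν k k' :=
  add_nonneg (sum_nonneg fun i _ => ite_nonneg (hlam i).le le_rfl)
    (sum_nonneg fun i _ => ite_nonneg (mul_nonneg hν.le (routeP_nonneg b k i)) le_rfl)

theorem qred_addE_pos {k : Fin J → ℕ} {i : Fin J} (hi : i ∈ Mset b k) (hik : k i < b i) :
    0 < qred lam b ν k (addE k i) :=
  add_pos_of_nonneg_of_pos (sum_nonneg fun j _ => ite_nonneg (hlam j).le le_rfl)
    (sum_pos' (fun j _ => ite_nonneg (mul_nonneg hν.le (routeP_nonneg b k j)) le_rfl)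
      ⟨i, mem_univ i, by simpa [hik] using mul_pos hν (routeP_pos hi)⟩)

theorem qred_subE_pos {k : Fin J → ℕ} {i : Fin J} (hik : 0 < k i) :
    0 < qred lam b ν k (subE k i) :=
  add_pos_of_pos_of_nonneg
    (sum_pos' (fun j _ => ite_nonneg (hlam j).le le_rfl)
      ⟨i, mem_univ i, by simpa [hik] using hlam i⟩)
    (sum_nonneg fun j _ => ite_nonneg (mul_nonneg hν.le (routeP_nonneg b k j)) le_rfl)

theorem reflTransGen_qredOnK_top (k : Kfin b) :
    ReflTransGen (fun x y => 0 < qredOnK lam b ν x y) k ⟨b, self_mem_Kfin b⟩ := by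
  by_cases hkb : k.1 = b
  · exact (Subtype.ext hkb : k = ⟨b, _⟩) ▸ ReflTransGen.refl
  obtain ⟨i, hi, hik⟩ := exists_mem_Mset_lt (mem_Kfin.1 k.2) hkb
  -- Under load balancing the supplier refills a most depleted location, which is never full.
  have hup : 0 < qredOnK lam b ν k ⟨addE k i, addE_mem_Kfin k.2 hik⟩ :=
    qred_addE_pos hlam hν hi hik
  exact ReflTransGen.head hup
    (reflTransGen_qredOnK_top ⟨addE k i, addE_mem_Kfin k.2 hik⟩)
termination_by ∑ j, (b j - k.1 j)
decreasing_by exact sum_sub_addE_lt hik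

theorem reflTransGen_top_qredOnK (k : Kfin b) :
    ReflTransGen (fun x y => 0 < qredOnK lam b ν x y) ⟨b, self_mem_Kfin b⟩ k := by
  by_cases hkb : k.1 = b
  · exact (Subtype.ext hkb : k = ⟨b, _⟩) ▸ ReflTransGen.refl
  obtain ⟨i, hik⟩ : ∃ i, k.1 i < b i := by
    by_contra! h
    exact hkb (funext fun j => (mem_Kfin.1 k.2 j).antisymm (h j))
  have hdown : 0 < qredOnK lam b ν ⟨addE k i, addE_mem_Kfin k.2 hik⟩ k := by
    simpa [qredOnK] using qred_subE_pos (b := b) (k := addE k.1 i) (i := i) hlam hν (by simp)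
  exact ReflTransGen.tail (reflTransGen_top_qredOnK ⟨addE k i, addE_mem_Kfin k.2 hik⟩) hdown
termination_by ∑ j, (b j - k.1 j)
decreasing_by exact sum_sub_addE_lt hik

theorem reflTransGen_qredOnK (k k' : Kfin b) :
    ReflTransGen (fun x y => 0 < qredOnK lam b ν x y) k k' :=
  (reflTransGen_qredOnK_top hlam hν k).trans (reflTransGen_top_qredOnK hlam hν k')

end

end InventoryChain

theorem exists_unique_reduced_balance_solution_general
    (J : ℕ) (lam : Fin J → ℝ) (hlam : ∀ j, 0 < lam j)
    (b : Fin J → ℕ) (ν : ℝ) (hν : 0 < ν) :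
    (∃ θ : (Fin J → ℕ) → ℝ,
        (∀ k, (∀ j, k j ≤ b j) → 0 < θ k) ∧ ReducedBalance lam b ν θ) ∧
      ∀ θ₁ θ₂ : (Fin J → ℕ) → ℝ,
        ReducedBalance lam b ν θ₁ → ReducedBalance lam b ν θ₂ →
        (∃ k, (∀ j, k j ≤ b j) ∧ θ₁ k ≠ 0) →
        (∃ k, (∀ j, k j ≤ b j) ∧ θ₂ k ≠ 0) →
        ∃ c : ℝ, ∀ k, (∀ j, k j ≤ b j) → θ₂ k = c * θ₁ k := by
  have hq : ∀ k k', 0 ≤ qredOnK lam b ν k k' := fun k k' => qred_nonneg hlam hν k k'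
  have hirr := reflTransGen_qredOnK (b := b) hlam hν
  constructor
  · obtain ⟨w, hw, hwpos⟩ := exists_pos_mem_balanceSolutions hq hirr
    let θ : (Fin J → ℕ) → ℝ := fun k => if hk : k ∈ Kfin b then w ⟨k, hk⟩ else 0
    have hθw : (Kfin b).restrict θ = w := funext fun k => dif_pos k.2
    refine ⟨θ, fun k hk => ?_, reducedBalance_iff.2 (hθw ▸ hw)⟩
    simpa [θ, mem_Kfin.2 hk] using hwpos ⟨k, mem_Kfin.2 hk⟩
  · rintro θ₁ θ₂ h₁ h₂ ⟨k₁, hk₁, hθ₁⟩ -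
    have h₁0 : (Kfin b).restrict θ₁ ≠ 0 := Function.ne_iff.2 ⟨⟨k₁, mem_Kfin.2 hk₁⟩, hθ₁⟩
    obtain ⟨c, hc⟩ := eq_smul_of_mem_balanceSolutions hq hirr (reducedBalance_iff.1 h₁) h₁0
      (reducedBalance_iff.1 h₂)
    exact ⟨c, fun k hk => congrFun hc ⟨k, mem_Kfin.2 hk⟩⟩

/-- existence of a strictly positive solution of the reduced balance
equations, and uniqueness up to a multiplicative constant. -/
theorem exists_unique_reduced_balance_solution
    (J : ℕ) (hJ : 1 < J) (lam : Fin J → ℝ) (hlam : ∀ j, 0 < lam j)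
    (b : Fin J → ℕ) (hb : ∀ j, 1 ≤ b j) (ν : ℝ) (hν : 0 < ν) :
    (∃ θ : (Fin J → ℕ) → ℝ,
        (∀ k, (∀ j, k j ≤ b j) → 0 < θ k) ∧ ReducedBalance lam b ν θ) ∧
      ∀ θ₁ θ₂ : (Fin J → ℕ) → ℝ,
        ReducedBalance lam b ν θ₁ → ReducedBalance lam b ν θ₂ →
        (∃ k, (∀ j, k j ≤ b j) ∧ θ₁ k ≠ 0) →
        (∃ k, (∀ j, k j ≤ b j) ∧ θ₂ k ≠ 0) →
        ∃ c : ℝ, ∀ k, (∀ j, k j ≤ b j) → θ₂ k = c * θ₁ k :=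
  exists_unique_reduced_balance_solution_general J lam hlam b ν hν
end

section
/- Assume b_j = 1 for every j ∈ {1,…,J}, so K = {0,1}^J. Define θ̃ : K → ℝ by θ̃(k) := (Π_{ℓ=0}^{s−1} 1/(J−ℓ)) · (Π_{j=1}^J (1/λ_j)^{k_j}) · (1/ν)^{J−s}, where s := Σ_{j=1}^J k_j (empty products equal 1). Then θ̃ is strictly positive and satisfies the reduced balance equations. (Note that in this case p_i(k) = 1/(J − s) whenever k_i = 0 and s < J.) -/
open Finset

section AuxLemmas

variable {J : ℕ}

lemma sum_addE (k : Fin J → ℕ) (i : Fin J) : ∑ j, addE k i j = (∑ j, k j) + 1 := by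
  unfold addE
  rw [Finset.sum_update_of_mem (Finset.mem_univ i),
    ← Finset.add_sum_erase _ k (Finset.mem_univ i),
    Finset.sdiff_singleton_eq_erase]
  ring

lemma sum_lt_of_zero (k : Fin J → ℕ) (hk : ∀ j, k j ≤ 1) (i : Fin J) (hi : k i = 0) :
    ∑ j, k j < J := by
  have h1 : ∑ j, k j = k i + ∑ j ∈ Finset.univ.erase i, k j :=
    (Finset.add_sum_erase _ k (Finset.mem_univ i)).symm
  have h2 : ∑ j ∈ Finset.univ.erase i, k j ≤ ∑ _j ∈ Finset.univ.erase i, 1 :=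
    Finset.sum_le_sum fun j _ => hk j
  have h3 : ∑ _j ∈ Finset.univ.erase i, (1 : ℕ) = J - 1 := by
    rw [Finset.sum_const, smul_eq_mul, mul_one, Finset.card_erase_of_mem (Finset.mem_univ i)]
    simp
  have h4 : 0 < J := i.pos
  omega

lemma card_filter_zero (k : Fin J → ℕ) (hk : ∀ j, k j ≤ 1) :
    (Finset.univ.filter (fun j => k j = 0)).card = J - ∑ j, k j := by
  have key : (∑ j, if k j = 0 then 1 else 0) + ∑ j, k j = J := by
    rw [← Finset.sum_add_distrib]
    have h : ∀ j ∈ Finset.univ, ((if k j = 0 then 1 else 0) + k j) = 1 := by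
      intro j _
      have := hk j
      split <;> omega
    rw [Finset.sum_congr rfl h]
    simp
  rw [Finset.card_filter]
  omega

lemma Mset_eq_one (b k : Fin J → ℕ) (hb : ∀ j, b j = 1) (hk : ∀ j, k j ≤ 1)
    (hs : ∑ j, k j < J) :
    Mset b k = Finset.univ.filter (fun i => k i = 0) := by
  have hex : ∃ i, k i = 0 := by
    by_contra h
    push_neg at h
    have h1 : ∀ j, k j = 1 := fun j => by have := hk j; have := h j; omega
    have h2 : ∑ j, k j = J := by
      rw [Finset.sum_congr rfl (fun j _ => h1 j)]
      simp
    omega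
  obtain ⟨i0, hi0⟩ := hex
  have hsup : Finset.univ.sup (fun j => b j - k j) = 1 := by
    apply le_antisymm
    · exact Finset.sup_le fun j _ => by rw [hb j]; omega
    · calc (1 : ℕ) = b i0 - k i0 := by rw [hb i0, hi0]
        _ ≤ _ := Finset.le_sup (f := fun j => b j - k j) (Finset.mem_univ i0)
  unfold Mset
  rw [hsup]
  refine Finset.filter_congr fun j _ => ?_
  rw [hb j]
  have := hk j
  constructor <;> (intro h; omega)

lemma routeP_one (b k : Fin J → ℕ) (hb : ∀ j, b j = 1) (hk : ∀ j, k j ≤ 1)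
    (i : Fin J) (hi : k i = 0) :
    routeP b k i = 1 / ((J : ℝ) - ((∑ j, k j : ℕ) : ℝ)) := by
  have hs := sum_lt_of_zero k hk i hi
  unfold routeP
  have hmem : i ∈ Mset b k := by
    rw [Mset_eq_one b k hb hk hs]
    simp [hi]
  rw [if_pos hmem, Mset_eq_one b k hb hk hs, card_filter_zero k hk,
    Nat.cast_sub (le_of_lt hs)]

lemma prod_pow_addE (lam : Fin J → ℝ) (k : Fin J → ℕ) (i : Fin J) (hi : k i = 0) :
    ∏ j, (1 / lam j) ^ (addE k i j) = (∏ j, (1 / lam j) ^ (k j)) * (1 / lam i) := by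
  rw [← Finset.mul_prod_erase _ (fun j => (1 / lam j) ^ (addE k i j)) (Finset.mem_univ i),
      ← Finset.mul_prod_erase _ (fun j => (1 / lam j) ^ (k j)) (Finset.mem_univ i)]
  have h1 : ∀ j ∈ Finset.univ.erase i,
      (1 / lam j) ^ (addE k i j) = (1 / lam j) ^ (k j) := by
    intro j hj
    rw [addE, Function.update_of_ne (Finset.ne_of_mem_erase hj)]
  rw [Finset.prod_congr rfl h1]
  have h2 : addE k i i = 1 := by rw [addE, Function.update_self, hi]
  rw [h2, hi]
  ring

lemma theta_addE (lam : Fin J → ℝ) (hlam : ∀ j, 0 < lam j) (ν : ℝ) (hν : 0 < ν)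
    (k : Fin J → ℕ) (hk : ∀ j, k j ≤ 1) (i : Fin J) (hi : k i = 0) :
    thetaOne lam ν (addE k i) * lam i
      = thetaOne lam ν k * (ν * (1 / ((J : ℝ) - ((∑ j, k j : ℕ) : ℝ)))) := by
  have hs := sum_lt_of_zero k hk i hi
  unfold thetaOne
  rw [sum_addE, prod_pow_addE lam k i hi, Finset.prod_range_succ]
  have e1 : (1 / ν) ^ (J - (∑ j, k j + 1))
      = (1 / ν) ^ (J - ∑ j, k j - 1) := by rw [Nat.sub_sub]
  have e2 : (1 / ν) ^ (J - ∑ j, k j)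
      = (1 / ν) ^ (J - ∑ j, k j - 1) * (1 / ν) := by
    rw [← pow_succ]; congr 1; omega
  rw [e1, e2]
  have hl : lam i ≠ 0 := ne_of_gt (hlam i)
  have hn : ν ≠ 0 := ne_of_gt hν
  have hd : (J : ℝ) - ((∑ j, k j : ℕ) : ℝ) ≠ 0 := by
    have : ((∑ j, k j : ℕ) : ℝ) < (J : ℝ) := by exact_mod_cast hs
    linarith
  have c1 : (1 / lam i) * lam i = 1 := one_div_mul_cancel hl
  have c2 : (1 / ν) * ν = 1 := one_div_mul_cancel hn
  linear_combination ((∏ l ∈ Finset.range (∑ j, k j), 1 / ((J : ℝ) - (l : ℝ)))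
      * (∏ j, (1 / lam j) ^ (k j)) * (1 / ν) ^ (J - ∑ j, k j - 1)
      * (1 / ((J : ℝ) - ((∑ j, k j : ℕ) : ℝ)))) * c1
    - ((∏ l ∈ Finset.range (∑ j, k j), 1 / ((J : ℝ) - (l : ℝ)))
      * (∏ j, (1 / lam j) ^ (k j)) * (1 / ν) ^ (J - ∑ j, k j - 1)
      * (1 / ((J : ℝ) - ((∑ j, k j : ℕ) : ℝ)))) * c2

end AuxLemmas

/-- for base stock levels all equal to one, the explicit measure
`θ̃(k) = (∏_{ℓ=0}^{s-1} 1/(J-ℓ)) · ∏_j (1/λ_j)^{k_j} · (1/ν)^{J-s}`, `s = Σ_j k_j`,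
is strictly positive and satisfies the reduced balance equations. -/

theorem theta_explicit_base_stock_one
    (J : ℕ) (hJ : 1 < J) (lam : Fin J → ℝ) (hlam : ∀ j, 0 < lam j)
    (b : Fin J → ℕ) (hb : ∀ j, b j = 1) (ν : ℝ) (hν : 0 < ν) :
    (∀ k : Fin J → ℕ, (∀ j, k j ≤ b j) → 0 < thetaOne lam ν k) ∧
      ReducedBalance lam b ν (thetaOne lam ν) := by
  constructor
  · intro k hk
    have hsle : ∑ j, k j ≤ J := by
      calc ∑ j, k j ≤ ∑ _j : Fin J, 1 :=
            Finset.sum_le_sum fun j _ => (hb j) ▸ hk j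
        _ = J := by simp
    unfold thetaOne
    refine mul_pos (mul_pos ?_ ?_) ?_
    · refine Finset.prod_pos fun l hl => ?_
      rw [Finset.mem_range] at hl
      have : (l : ℝ) < (J : ℝ) := by exact_mod_cast lt_of_lt_of_le hl hsle
      exact one_div_pos.mpr (by linarith)
    · exact Finset.prod_pos fun j _ => pow_pos (one_div_pos.mpr (hlam j)) _
    · exact pow_pos (one_div_pos.mpr hν) _
  · intro k hk
    have hk1 : ∀ j, k j ≤ 1 := fun j => (hb j) ▸ hk j
    unfold RBEat
    have hA : ∀ i ∈ Finset.univ.filter (fun i => k i < b i),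
        thetaOne lam ν k * (ν * routeP b k i) = thetaOne lam ν (addE k i) * lam i := by
      intro i hi
      rw [Finset.mem_filter] at hi
      have hik : k i = 0 := by have := hk1 i; have := hi.2; rw [hb i] at this; omega
      rw [routeP_one b k hb hk1 i hik]
      exact (theta_addE lam hlam ν hν k hk1 i hik).symm
    have hB : ∀ i ∈ Finset.univ.filter (fun i => 0 < k i),
        thetaOne lam ν k * lam i
          = thetaOne lam ν (subE k i) * ν * routeP b (subE k i) i := by
      intro i hi
      rw [Finset.mem_filter] at hi
      have hik : k i = 1 := by have := hk1 i; have := hi.2; omega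
      set k' := subE k i with hk'
      have hk'i : k' i = 0 := by rw [hk', subE, Function.update_self, hik]
      have hk'1 : ∀ j, k' j ≤ 1 := by
        intro j
        by_cases hji : j = i
        · rw [hji, hk'i]; omega
        · rw [hk', subE, Function.update_of_ne hji]; exact hk1 j
      have hkadd : addE k' i = k := by
        funext j
        by_cases hji : j = i
        · subst hji
          rw [addE, Function.update_self, hk'i, hik]
        · rw [addE, Function.update_of_ne hji, hk', subE, Function.update_of_ne hji]
      have := theta_addE lam hlam ν hν k' hk'1 i hk'i
      rw [hkadd] at this
      rw [routeP_one b k' hb hk'1 i hk'i, mul_assoc]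
      exact this.symm.symm
    rw [mul_add, Finset.mul_sum, Finset.mul_sum,
      Finset.sum_congr rfl hA, Finset.sum_congr rfl hB]
    exact add_comm _ _
end

section
/- Assume J = 2 and b_1 ≥ b_2. Let θ : K → ℝ be nonnegative, satisfy the reduced balance equations, and have total mass Σ_{k∈K} θ(k) = 1; write θ(k_1,k_2) for its values. Then for every integer ℓ_1 with 1 ≤ ℓ_1 ≤ b_1 − b_2: (Σ_{k_2=0}^{b_2} θ(ℓ_1, k_2)) · λ_1 = (Σ_{k_2=0}^{b_2} θ(ℓ_1 − 1, k_2)) · ν. -/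
open Finset

lemma Mset_strict {b k : Fin 2 → ℕ} (h : b 1 - k 1 < b 0 - k 0) : Mset b k = {0} := by
  have hsup : (Finset.univ.sup (fun j : Fin 2 => b j - k j)) = b 0 - k 0 := by
    apply le_antisymm
    · apply Finset.sup_le
      intro j _
      fin_cases j
      · exact le_refl _
      · show b 1 - k 1 ≤ b 0 - k 0; omega
    · exact Finset.le_sup (f := fun j => b j - k j) (Finset.mem_univ 0)
  ext i
  fin_cases i <;> simp [Mset, hsup]
  · show ¬(b 1 - k 1 = b 0 - k 0); omega

lemma routeP_strict0 {b k : Fin 2 → ℕ} (h : b 1 - k 1 < b 0 - k 0) : routeP b k 0 = 1 := by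
  simp [routeP, Mset_strict h]

lemma routeP_strict1 {b k : Fin 2 → ℕ} (h : b 1 - k 1 < b 0 - k 0) : routeP b k 1 = 0 := by
  simp [routeP, Mset_strict h]

lemma tele (f : ℕ → ℝ) (n : ℕ) :
    ∑ k ∈ Finset.range (n+1), (if 0 < k then f k else 0)
      = ∑ k ∈ Finset.range (n+1), (if k < n then f (k+1) else 0) := by
  rw [Finset.sum_range_succ', Finset.sum_range_succ]
  simp only [Nat.succ_pos, if_pos, lt_irrefl, ite_false, if_false, add_zero]
  exact Finset.sum_congr rfl (fun i hi => (if_pos (Finset.mem_range.mp hi)).symm)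

lemma addE0 (m k₂ : ℕ) : addE ![m, k₂] 0 = ![m+1, k₂] := by
  funext i; fin_cases i <;> simp [addE, Function.update]
lemma addE1 (m k₂ : ℕ) : addE ![m, k₂] 1 = ![m, k₂+1] := by
  funext i; fin_cases i <;> simp [addE, Function.update]
lemma subE0 (m k₂ : ℕ) : subE ![m, k₂] 0 = ![m-1, k₂] := by
  funext i; fin_cases i <;> simp [subE, Function.update]
lemma subE1 (m k₂ : ℕ) : subE ![m, k₂] 1 = ![m, k₂-1] := by
  funext i; fin_cases i <;> simp [subE, Function.update]

lemma rbe2 {lam : Fin 2 → ℝ} {b : Fin 2 → ℕ} {ν : ℝ} {θ : (Fin 2 → ℕ) → ℝ}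
    {k : Fin 2 → ℕ} (h : RBEat lam b ν θ k) :
    θ k * (((if 0 < k 0 then lam 0 else 0) + (if 0 < k 1 then lam 1 else 0))
      + ((if k 0 < b 0 then ν * routeP b k 0 else 0) + (if k 1 < b 1 then ν * routeP b k 1 else 0)))
    = ((if k 0 < b 0 then θ (addE k 0) * lam 0 else 0) + (if k 1 < b 1 then θ (addE k 1) * lam 1 else 0))
      + ((if 0 < k 0 then θ (subE k 0) * ν * routeP b (subE k 0) 0 else 0)
         + (if 0 < k 1 then θ (subE k 1) * ν * routeP b (subE k 1) 1 else 0)) := by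
  have h' := h
  unfold RBEat at h'
  simpa [Finset.sum_filter, Fin.sum_univ_two] using h'

lemma row {lam : Fin 2 → ℝ} {b : Fin 2 → ℕ} {ν : ℝ} {θ : (Fin 2 → ℕ) → ℝ}
    (hb12 : b 1 ≤ b 0) (hbal : ReducedBalance lam b ν θ)
    {m : ℕ} (hm : m < b 0 - b 1) :
    (∑ k₂ ∈ Finset.range (b 1 + 1), θ ![m, k₂]) * ((if 0 < m then lam 0 else 0) + ν)
      = (∑ k₂ ∈ Finset.range (b 1 + 1), θ ![m+1, k₂]) * lam 0
        + (if 0 < m then (∑ k₂ ∈ Finset.range (b 1 + 1), θ ![m-1, k₂]) * ν else 0) := by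
  have key : ∀ k₂ ∈ Finset.range (b 1 + 1),
      θ ![m, k₂] * ((if 0 < m then lam 0 else 0) + ν)
        + (if 0 < k₂ then θ ![m, k₂] * lam 1 else 0)
      = (θ ![m+1, k₂] * lam 0 + (if 0 < m then θ ![m-1, k₂] * ν else 0))
        + (if k₂ < b 1 then θ ![m, k₂+1] * lam 1 else 0) := by
    intro k₂ hk₂
    have hk₂' : k₂ ≤ b 1 := by
      have := Finset.mem_range.mp hk₂; omega
    have e0 : (![m, k₂] : Fin 2 → ℕ) 0 = m := rfl
    have e1 : (![m, k₂] : Fin 2 → ℕ) 1 = k₂ := rfl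
    have h2 := rbe2 (hbal ![m, k₂] (fun j => by
      fin_cases j
      · show m ≤ b 0; omega
      · show k₂ ≤ b 1; omega))
    rw [e0, e1, addE0, addE1, subE0, subE1] at h2
    have hr0 : routeP b ![m, k₂] 0 = 1 := by
      apply routeP_strict0; rw [e0, e1]; omega
    have hr1 : routeP b ![m, k₂] 1 = 0 := by
      apply routeP_strict1; rw [e0, e1]; omega
    have hr0' : routeP b ![m-1, k₂] 0 = 1 := by
      apply routeP_strict0
      show b 1 - k₂ < b 0 - (m-1)
      omega
    have hr1' : routeP b ![m, k₂-1] 1 = 0 := by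
      apply routeP_strict1
      show b 1 - (k₂-1) < b 0 - m
      omega
    have hmb : m < b 0 := by omega
    rw [hr0, hr1, hr0', hr1'] at h2
    simp only [if_pos hmb] at h2
    split_ifs at h2 ⊢ <;> linarith
  have hsum := Finset.sum_congr rfl key
  rw [Finset.sum_add_distrib, Finset.sum_add_distrib, Finset.sum_add_distrib] at hsum
  rw [tele (fun k₂ => θ ![m, k₂] * lam 1) (b 1)] at hsum
  rw [← Finset.sum_mul, ← Finset.sum_mul] at hsum
  by_cases hm0 : 0 < m
  · simp only [if_pos hm0] at hsum ⊢
    rw [← Finset.sum_mul] at hsum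
    linarith
  · simp only [if_neg hm0] at hsum ⊢
    simp only [Finset.sum_const_zero] at hsum
    linarith

/-- two heterogeneous locations, cut balance for
`1 ≤ ℓ₁ ≤ b₁ - b₂`. -/
theorem two_locations_marginal_Y1_low
    (lam : Fin 2 → ℝ) (hlam : ∀ j, 0 < lam j)
    (b : Fin 2 → ℕ) (hb : ∀ j, 1 ≤ b j) (hb12 : b 1 ≤ b 0)
    (ν : ℝ) (hν : 0 < ν)
    (θ : (Fin 2 → ℕ) → ℝ)
    (hθnn : ∀ k : Fin 2 → ℕ, (∀ j, k j ≤ b j) → 0 ≤ θ k)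
    (hbal : ReducedBalance lam b ν θ)
    (hmass : ∑ k ∈ Kfin b, θ k = 1) :
    ∀ ℓ₁ : ℕ, 1 ≤ ℓ₁ → ℓ₁ ≤ b 0 - b 1 →
      (∑ k₂ ∈ Finset.range (b 1 + 1), θ ![ℓ₁, k₂]) * lam 0
        = (∑ k₂ ∈ Finset.range (b 1 + 1), θ ![ℓ₁ - 1, k₂]) * ν := by
  intro l1
  induction l1 with
  | zero => intro h1 _; omega
  | succ n ih =>
    intro _ h2
    by_cases hn : n = 0
    · subst hn
      have hr := row hb12 hbal (m := 0) (by omega)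
      simp only [lt_irrefl, if_neg, ite_false, zero_add, add_zero] at hr
      linarith
    · have hn1 : 0 < n := by omega
      have ihh := ih (by omega) (by omega)
      have hr := row hb12 hbal (m := n) (by omega)
      rw [if_pos hn1, if_pos hn1] at hr
      have hred : n + 1 - 1 = n := rfl
      rw [hred]
      linarith
end

section
/- Assume J = 2 and b_1 ≥ b_2. Let θ : K → ℝ be nonnegative, satisfy the reduced balance equations, and have total mass Σ_{k∈K} θ(k) = 1; write θ(k_1,k_2) for its values. Then for every integer ℓ_1 with b_1 − b_2 + 1 ≤ ℓ_1 ≤ b_1 − 1: (Σ_{k_2=0}^{b_2} θ(ℓ_1, k_2)) · λ_1 = θ(ℓ_1 − 1, ℓ_1 − 1 − b_1 + b_2) · ν/2 + (Σ_{k_2 = ℓ_1 − b_1 + b_2}^{b_2} θ(ℓ_1 − 1, k_2)) · ν. -/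
open Finset

/-!
Summing the reduced balance equations over a column `{k₁ = m}` cancels all flows inside the
column and leaves a cut equation: the flows across the two vertical cuts bordering the column
balance. Across the last cut, to the right of column `b₁`, nothing flows, so by downward
induction the leftward flow `λ₁ · Σ_{k₂} θ(m, k₂)` equals the rightward replenishment flow
`ν · Σ_{k₂} θ(m - 1, k₂) p₁(m - 1, k₂)` for every `1 ≤ m ≤ b₁`. When `m - 1 ≥ b₁ - b₂`,
`p₁(m - 1, k₂)` is `0`, `1/2` or `1` according as `k₂` is below, at or above `m - 1 - b₁ + b₂`.
Location `j` of the paper is the index `j - 1 : Fin 2`.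
-/

namespace TwoLocations

variable {lam : Fin 2 → ℝ} {b : Fin 2 → ℕ} {ν : ℝ} {θ : (Fin 2 → ℕ) → ℝ}

theorem Mset_two (b k : Fin 2 → ℕ) :
    Mset b k = if b 1 - k 1 < b 0 - k 0 then {0}
      else if b 0 - k 0 < b 1 - k 1 then {1} else univ := by
  have hsup : univ.sup (fun j => b j - k j) = max (b 0 - k 0) (b 1 - k 1) := by
    rw [show (univ : Finset (Fin 2)) = {0, 1} by decide]
    simp [Finset.sup_insert]
  unfold Mset
  rw [hsup]
  rcases lt_trichotomy (b 0 - k 0) (b 1 - k 1) with h | h | h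
  · rw [max_eq_right h.le, if_neg (by omega), if_pos h]
    ext i; fin_cases i <;> simp; omega
  · rw [h, max_self, if_neg (by omega), if_neg (by omega)]
    ext i; fin_cases i <;> simp [h]
  · rw [max_eq_left h.le, if_pos h]
    ext i; fin_cases i <;> simp; omega

theorem routeP_pair_zero (b : Fin 2 → ℕ) (m n : ℕ) :
    routeP b ![m, n] 0 = if b 1 - n < b 0 - m then 1
      else if b 0 - m < b 1 - n then 0 else 1 / 2 := by
  rw [routeP, Mset_two]
  split_ifs <;> simp_all [Finset.card_univ]

@[simp] theorem addE_pair_zero (m n : ℕ) : addE ![m, n] 0 = ![m + 1, n] := by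
  funext i; fin_cases i <;> simp [addE, Function.update]

@[simp] theorem addE_pair_one (m n : ℕ) : addE ![m, n] 1 = ![m, n + 1] := by
  funext i; fin_cases i <;> simp [addE, Function.update]

@[simp] theorem subE_pair_zero (m n : ℕ) : subE ![m, n] 0 = ![m - 1, n] := by
  funext i; fin_cases i <;> simp [subE, Function.update]

@[simp] theorem subE_pair_one (m n : ℕ) : subE ![m, n] 1 = ![m, n - 1] := by
  funext i; fin_cases i <;> simp [subE, Function.update]

theorem RBEat.pair {m n : ℕ} (h : RBEat lam b ν θ ![m, n]) :
    θ ![m, n] * (((if 0 < m then lam 0 else 0) + (if 0 < n then lam 1 else 0))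
      + ((if m < b 0 then ν * routeP b ![m, n] 0 else 0)
          + (if n < b 1 then ν * routeP b ![m, n] 1 else 0)))
    = ((if m < b 0 then θ ![m + 1, n] * lam 0 else 0)
        + (if n < b 1 then θ ![m, n + 1] * lam 1 else 0))
      + ((if 0 < m then θ ![m - 1, n] * ν * routeP b ![m - 1, n] 0 else 0)
          + (if 0 < n then θ ![m, n - 1] * ν * routeP b ![m, n - 1] 1 else 0)) := by
  simp only [RBEat, sum_filter, Fin.sum_univ_two, Matrix.cons_val_zero, Matrix.cons_val_one,
    addE_pair_zero, addE_pair_one, subE_pair_zero, subE_pair_one] at h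
  exact h

theorem sum_range_succ_ite_pos {M : Type*} [AddCommMonoid M] (g : ℕ → M) (N : ℕ) :
    ∑ n ∈ range (N + 1), (if 0 < n then g n else 0)
      = ∑ n ∈ range (N + 1), (if n < N then g (n + 1) else 0) := by
  rw [sum_range_succ', sum_range_succ, if_neg (lt_irrefl 0), if_neg (lt_irrefl N),
    add_zero, add_zero]
  exact sum_congr rfl fun n hn => by rw [if_pos n.succ_pos, if_pos (mem_range.mp hn)]

noncomputable def columnMass (b : Fin 2 → ℕ) (θ : (Fin 2 → ℕ) → ℝ) (m : ℕ) : ℝ :=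
  ∑ n ∈ range (b 1 + 1), θ ![m, n]

/-- The probability flow from column `m` to column `m + 1`, i.e. across the cut `k₁ ≤ m`. -/
noncomputable def rightFlux (b : Fin 2 → ℕ) (ν : ℝ) (θ : (Fin 2 → ℕ) → ℝ) (m : ℕ) : ℝ :=
  ∑ n ∈ range (b 1 + 1), θ ![m, n] * ν * routeP b ![m, n] 0

theorem columnMass_add_rightFlux (hbal : ReducedBalance lam b ν θ) {m : ℕ}
    (hm0 : 0 < m) (hm : m ≤ b 0) :
    columnMass b θ m * lam 0 + (if m < b 0 then rightFlux b ν θ m else 0)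
      = (if m < b 0 then columnMass b θ (m + 1) * lam 0 else 0) + rightFlux b ν θ (m - 1) := by
  have hcolumn : ∀ n ∈ range (b 1 + 1),
      θ ![m, n] * lam 0 + (if 0 < n then θ ![m, n] * lam 1 else 0)
        + (if m < b 0 then θ ![m, n] * ν * routeP b ![m, n] 0 else 0)
        + (if n < b 1 then θ ![m, n] * ν * routeP b ![m, n] 1 else 0)
      = (if m < b 0 then θ ![m + 1, n] * lam 0 else 0)
        + (if n < b 1 then θ ![m, n + 1] * lam 1 else 0)
        + θ ![m - 1, n] * ν * routeP b ![m - 1, n] 0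
        + (if 0 < n then θ ![m, n - 1] * ν * routeP b ![m, n - 1] 1 else 0) := by
    intro n hn
    have h := RBEat.pair (hbal ![m, n] (Fin.forall_fin_two.mpr
      ⟨hm, Nat.lt_succ_iff.mp (mem_range.mp hn)⟩))
    rw [if_pos hm0, if_pos hm0] at h
    split_ifs at h ⊢ <;> linear_combination h
  have hsum := sum_congr rfl hcolumn
  simp only [sum_add_distrib] at hsum
  -- the flows between neighbouring states of one column cancel
  have hdown : ∑ n ∈ range (b 1 + 1), (if 0 < n then θ ![m, n] * lam 1 else 0)
      = ∑ n ∈ range (b 1 + 1), (if n < b 1 then θ ![m, n + 1] * lam 1 else 0) :=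
    sum_range_succ_ite_pos (fun n => θ ![m, n] * lam 1) (b 1)
  have hup : ∑ n ∈ range (b 1 + 1),
        (if 0 < n then θ ![m, n - 1] * ν * routeP b ![m, n - 1] 1 else 0)
      = ∑ n ∈ range (b 1 + 1), (if n < b 1 then θ ![m, n] * ν * routeP b ![m, n] 1 else 0) :=
    sum_range_succ_ite_pos (fun n => θ ![m, n - 1] * ν * routeP b ![m, n - 1] 1) (b 1)
  rw [hdown, hup, sum_ite_irrel, sum_ite_irrel, sum_const_zero, ← sum_mul, ← sum_mul] at hsum
  unfold columnMass rightFlux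
  split_ifs at hsum ⊢ <;> linarith

theorem columnMass_mul_eq_rightFlux (hbal : ReducedBalance lam b ν θ) {m : ℕ}
    (hm0 : 0 < m) (hm : m ≤ b 0) :
    columnMass b θ m * lam 0 = rightFlux b ν θ (m - 1) := by
  refine Nat.decreasingInduction' (P := fun k => columnMass b θ k * lam 0 = rightFlux b ν θ (k - 1))
    (fun k hk hmk ih => ?_) hm ?_
  · have hcut := columnMass_add_rightFlux hbal (hm0.trans_le hmk) hk.le
    rw [if_pos hk, if_pos hk, ih, Nat.add_sub_cancel] at hcut
    linarith
  · simpa using columnMass_add_rightFlux hbal (hm0.trans_le hm) le_rfl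

theorem routeP_pair_zero_of_le (hb12 : b 1 ≤ b 0) {m n : ℕ} (hm : b 0 - b 1 ≤ m)
    (hmb : m < b 0) (hn : n ≤ b 1) :
    routeP b ![m, n] 0
      = if n < m - (b 0 - b 1) then 0 else if n = m - (b 0 - b 1) then 1 / 2 else 1 := by
  rw [routeP_pair_zero]
  rcases lt_trichotomy n (m - (b 0 - b 1)) with h | h | h
  · rw [if_neg (by omega), if_pos (by omega), if_pos h]
  · rw [if_neg (by omega), if_neg (by omega), if_neg (by omega), if_pos h]
  · rw [if_pos (by omega), if_neg (by omega), if_neg (by omega)]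

theorem sum_range_succ_mul_ite_lt_eq (f : ℕ → ℝ) {c N : ℕ} (hc : c ≤ N) :
    ∑ n ∈ range (N + 1), f n * (if n < c then 0 else if n = c then 1 / 2 else 1)
      = f c / 2 + ∑ n ∈ Icc (c + 1) N, f n := by
  rw [← sum_range_add_sum_Ico _ (show c ≤ N + 1 by omega),
    sum_eq_sum_Ico_succ_bot (show c < N + 1 by omega), Ico_add_one_right_eq_Icc,
    sum_eq_zero fun n hn => by rw [if_pos (mem_range.mp hn), mul_zero],
    if_neg (lt_irrefl c), if_pos rfl, zero_add, mul_one_div]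
  congr 1
  exact sum_congr rfl fun n hn => by
    rw [if_neg (by simp at hn; omega), if_neg (by simp at hn; omega), mul_one]

theorem rightFlux_eq (hb12 : b 1 ≤ b 0) {m : ℕ} (hm : b 0 - b 1 ≤ m) (hmb : m < b 0) :
    rightFlux b ν θ m = θ ![m, m - (b 0 - b 1)] * (ν / 2)
      + (∑ n ∈ Icc (m + 1 - (b 0 - b 1)) (b 1), θ ![m, n]) * ν := by
  rw [rightFlux, sum_congr rfl fun n hn => by
      rw [routeP_pair_zero_of_le hb12 hm hmb (Nat.lt_succ_iff.mp (mem_range.mp hn))],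
    sum_range_succ_mul_ite_lt_eq (fun n => θ ![m, n] * ν) (by omega),
    show m + 1 - (b 0 - b 1) = m - (b 0 - b 1) + 1 by omega, sum_mul]
  ring

end TwoLocations

theorem two_locations_marginal_Y1_mid_general
    (lam : Fin 2 → ℝ)
    (b : Fin 2 → ℕ) (hb12 : b 1 ≤ b 0)
    (ν : ℝ)
    (θ : (Fin 2 → ℕ) → ℝ)
    (hbal : ReducedBalance lam b ν θ) :
    ∀ ℓ₁ : ℕ, b 0 - b 1 + 1 ≤ ℓ₁ → ℓ₁ ≤ b 0 - 1 →
      (∑ k₂ ∈ Finset.range (b 1 + 1), θ ![ℓ₁, k₂]) * lam 0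
        = θ ![ℓ₁ - 1, ℓ₁ - 1 - (b 0 - b 1)] * (ν / 2)
          + (∑ k₂ ∈ Finset.Icc (ℓ₁ - (b 0 - b 1)) (b 1), θ ![ℓ₁ - 1, k₂]) * ν := by
  intro ℓ₁ hlow hhigh
  have hcut := TwoLocations.columnMass_mul_eq_rightFlux hbal (m := ℓ₁) (by omega) (by omega)
  rwa [TwoLocations.rightFlux_eq hb12 (by omega) (by omega),
    show ℓ₁ - 1 + 1 - (b 0 - b 1) = ℓ₁ - (b 0 - b 1) by omega] at hcut

/-- two heterogeneous locations, cut balance for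
`b₁ - b₂ + 1 ≤ ℓ₁ ≤ b₁ - 1`. -/
theorem two_locations_marginal_Y1_mid
    (lam : Fin 2 → ℝ) (hlam : ∀ j, 0 < lam j)
    (b : Fin 2 → ℕ) (hb : ∀ j, 1 ≤ b j) (hb12 : b 1 ≤ b 0)
    (ν : ℝ) (hν : 0 < ν)
    (θ : (Fin 2 → ℕ) → ℝ)
    (hθnn : ∀ k : Fin 2 → ℕ, (∀ j, k j ≤ b j) → 0 ≤ θ k)
    (hbal : ReducedBalance lam b ν θ)
    (hmass : ∑ k ∈ Kfin b, θ k = 1) :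
    ∀ ℓ₁ : ℕ, b 0 - b 1 + 1 ≤ ℓ₁ → ℓ₁ ≤ b 0 - 1 →
      (∑ k₂ ∈ Finset.range (b 1 + 1), θ ![ℓ₁, k₂]) * lam 0
        = θ ![ℓ₁ - 1, ℓ₁ - 1 - (b 0 - b 1)] * (ν / 2)
          + (∑ k₂ ∈ Finset.Icc (ℓ₁ - (b 0 - b 1)) (b 1), θ ![ℓ₁ - 1, k₂]) * ν :=
  two_locations_marginal_Y1_mid_general lam b hb12 ν θ hbal
end

section
/- Assume J = 2 and b_1 ≥ b_2. Let θ : K → ℝ be nonnegative, satisfy the reduced balance equations, and have total mass Σ_{k∈K} θ(k) = 1; write θ(k_1,k_2) for its values. Then for every integer ℓ_2 with 1 ≤ ℓ_2 ≤ b_2: (Σ_{k_1=0}^{b_1} θ(k_1, ℓ_2)) · λ_2 = θ(b_1 − b_2 + ℓ_2 − 1, ℓ_2 − 1) · ν/2 + (Σ_{k_1 = b_1 − b_2 + ℓ_2}^{b_1} θ(k_1, ℓ_2 − 1)) · ν. -/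
open Finset

/-!
Location `j` of the paper is index `j - 1` here. Summing the reduced balance equations over a row
`{k : k₂ = c}`, the transitions that move only the first coordinate cancel by telescoping, which
leaves a balance of the flows across the cuts between consecutive rows: the demand flow
`λ₂ · θ(row c)` down out of row `c` and the replenishment flow `ν · Σ_{k₁} θ(k₁, c) p₂(k₁, c)` up
out of row `c`. Induction from the bottom row shows that the down-flow out of row `c + 1` equals
the up-flow out of row `c`. When `b₁ ≥ b₂` the routing rule sends a replenishment from `(k₁, c)` to
location 2 exactly when `k₁ > b₁ - b₂ + c`, and with probability `1/2` when `k₁ = b₁ - b₂ + c`,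
which evaluates the up-flow.
-/

@[simp] lemma addE_two_zero (a c : ℕ) : addE ![a, c] 0 = ![a + 1, c] := by
  funext i; fin_cases i <;> simp [addE]

@[simp] lemma addE_two_one (a c : ℕ) : addE ![a, c] 1 = ![a, c + 1] := by
  funext i; fin_cases i <;> simp [addE]

@[simp] lemma subE_two_zero (a c : ℕ) : subE ![a, c] 0 = ![a - 1, c] := by
  funext i; fin_cases i <;> simp [subE]

@[simp] lemma subE_two_one (a c : ℕ) : subE ![a, c] 1 = ![a, c - 1] := by
  funext i; fin_cases i <;> simp [subE]

lemma routeP_two_one (b k : Fin 2 → ℕ) :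
    routeP b k 1 = if b 0 - k 0 < b 1 - k 1 then 1
      else if b 0 - k 0 = b 1 - k 1 then 1 / 2 else 0 := by
  have hsup : univ.sup (fun j => b j - k j) = max (b 0 - k 0) (b 1 - k 1) := by
    simp [Fin.univ_succ]
  simp only [routeP, Mset, hsup, mem_filter, mem_univ, true_and]
  rw [card_filter, Fin.sum_univ_two]
  rcases lt_trichotomy (b 0 - k 0) (b 1 - k 1) with h | h | h
  · simp [h, max_eq_right h.le, h.ne]
  · simp [h]
  · simp [max_eq_left h.le, h.ne, h.ne', not_lt.mpr h.le]

section Shift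

variable {M : Type*} [AddCommMonoid M]

lemma sum_range_succ_ite_pos (n : ℕ) (f : ℕ → M) :
    ∑ a ∈ range (n + 1), (if 0 < a then f a else 0) = ∑ a ∈ range n, f (a + 1) := by
  rw [sum_range_succ']
  simp

lemma sum_range_succ_ite_lt (n : ℕ) (f : ℕ → M) :
    ∑ a ∈ range (n + 1), (if a < n then f a else 0) = ∑ a ∈ range n, f a := by
  rw [sum_range_succ, if_neg (lt_irrefl n), add_zero]
  exact sum_congr rfl fun a ha => if_pos (mem_range.mp ha)

end Shift

section TwoLocations

variable (lam : Fin 2 → ℝ) (b : Fin 2 → ℕ) (ν : ℝ) (θ : (Fin 2 → ℕ) → ℝ)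

lemma RBEat.fin_two {a c : ℕ} (h : RBEat lam b ν θ ![a, c]) :
    ((if 0 < a then θ ![a, c] * lam 0 else 0)
        + (if a < b 0 then θ ![a, c] * ν * routeP b ![a, c] 0 else 0))
      + ((if 0 < c then θ ![a, c] * lam 1 else 0)
        + (if c < b 1 then θ ![a, c] * ν * routeP b ![a, c] 1 else 0))
    = ((if a < b 0 then θ ![a + 1, c] * lam 0 else 0)
        + (if 0 < a then θ ![a - 1, c] * ν * routeP b ![a - 1, c] 0 else 0))
      + ((if c < b 1 then θ ![a, c + 1] * lam 1 else 0)
        + (if 0 < c then θ ![a, c - 1] * ν * routeP b ![a, c - 1] 1 else 0)) := by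
  simp only [RBEat, sum_filter, Fin.sum_univ_two, mul_add, mul_ite, mul_zero, ← mul_assoc] at h
  -- `rw` rather than `simp`, so that the `Decidable` instances of the `if`s are rewritten too
  rw [addE_two_zero, addE_two_one, subE_two_zero, subE_two_one, Matrix.cons_val_zero,
    Matrix.cons_val_one, Matrix.cons_val_zero] at h
  linear_combination h

def rowMass (c : ℕ) : ℝ := ∑ a ∈ range (b 0 + 1), θ ![a, c]

noncomputable def upFlow (c : ℕ) : ℝ :=
  ∑ a ∈ range (b 0 + 1), θ ![a, c] * ν * routeP b ![a, c] 1

variable {lam b ν θ}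

lemma ReducedBalance.row_balance (hbal : ReducedBalance lam b ν θ) {c : ℕ} (hc : c ≤ b 1) :
    (if 0 < c then rowMass b θ c * lam 1 else 0) + (if c < b 1 then upFlow b ν θ c else 0)
      = (if c < b 1 then rowMass b θ (c + 1) * lam 1 else 0)
        + (if 0 < c then upFlow b ν θ (c - 1) else 0) := by
  have hstates := sum_congr rfl fun a (ha : a ∈ range (b 0 + 1)) =>
    (hbal ![a, c] (by have := mem_range.mp ha; intro j; fin_cases j <;> simp <;> omega)).fin_two
  simp only [sum_add_distrib, sum_ite_irrel, sum_const_zero] at hstates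
  have hhorizontal :
      ∑ a ∈ range (b 0 + 1), (if 0 < a then θ ![a, c] * lam 0 else 0)
        + ∑ a ∈ range (b 0 + 1), (if a < b 0 then θ ![a, c] * ν * routeP b ![a, c] 0 else 0)
      = ∑ a ∈ range (b 0 + 1), (if a < b 0 then θ ![a + 1, c] * lam 0 else 0)
        + ∑ a ∈ range (b 0 + 1),
            (if 0 < a then θ ![a - 1, c] * ν * routeP b ![a - 1, c] 0 else 0) := by
    rw [sum_range_succ_ite_pos, sum_range_succ_ite_lt, sum_range_succ_ite_lt,
      sum_range_succ_ite_pos]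
    simp only [Nat.add_sub_cancel, add_comm]
  simp only [rowMass, upFlow, sum_mul]
  linarith

lemma ReducedBalance.rowMass_succ_mul_eq_upFlow (hbal : ReducedBalance lam b ν θ) {c : ℕ}
    (hc : c < b 1) : rowMass b θ (c + 1) * lam 1 = upFlow b ν θ c := by
  induction c with
  | zero => simpa [hc] using (hbal.row_balance hc.le).symm
  | succ c ih =>
    have hrow := hbal.row_balance hc.le
    simp only [Nat.succ_pos, if_true, hc, Nat.add_sub_cancel] at hrow
    linarith [ih (by omega)]

lemma upFlow_eq (hb : b 1 ≤ b 0) {c : ℕ} (hc : c ≤ b 1) :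
    upFlow b ν θ c = θ ![b 0 - b 1 + c, c] * (ν / 2)
      + (∑ a ∈ Icc (b 0 - b 1 + c + 1) (b 0), θ ![a, c]) * ν := by
  have hterm : ∀ a ∈ range (b 0 + 1), θ ![a, c] * ν * routeP b ![a, c] 1
      = (if a = b 0 - b 1 + c then θ ![a, c] * (ν / 2) else 0)
        + (if b 0 - b 1 + c < a then θ ![a, c] * ν else 0) := by
    intro a ha
    have := mem_range.mp ha
    rw [routeP_two_one, Matrix.cons_val_zero, Matrix.cons_val_one, Matrix.cons_val_zero]
    split_ifs <;> first | (exfalso; omega) | ring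
  rw [upFlow, sum_congr rfl hterm, sum_add_distrib, sum_ite_eq', if_pos (by simp; omega),
    ← sum_filter, sum_mul]
  congr 2
  ext a
  simp only [mem_filter, mem_range, mem_Icc]
  omega

end TwoLocations

theorem two_locations_marginal_Y2_general
    (lam : Fin 2 → ℝ)
    (b : Fin 2 → ℕ) (hb12 : b 1 ≤ b 0)
    (ν : ℝ)
    (θ : (Fin 2 → ℕ) → ℝ)
    (hbal : ReducedBalance lam b ν θ) :
    ∀ ℓ₂ : ℕ, 1 ≤ ℓ₂ → ℓ₂ ≤ b 1 →
      (∑ k₁ ∈ Finset.range (b 0 + 1), θ ![k₁, ℓ₂]) * lam 1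
        = θ ![b 0 - b 1 + ℓ₂ - 1, ℓ₂ - 1] * (ν / 2)
          + (∑ k₁ ∈ Finset.Icc (b 0 - b 1 + ℓ₂) (b 0), θ ![k₁, ℓ₂ - 1]) * ν := by
  intro ℓ₂ hℓ₂ hℓ₂b
  obtain ⟨c, rfl⟩ : ∃ c, ℓ₂ = c + 1 := ⟨ℓ₂ - 1, by omega⟩
  rw [show b 0 - b 1 + (c + 1) - 1 = b 0 - b 1 + c by omega, Nat.add_sub_cancel, ← add_assoc]
  exact (hbal.rowMass_succ_mul_eq_upFlow hℓ₂b).trans (upFlow_eq hb12 (by omega))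

/-- two heterogeneous locations, cut balance for the second
inventory, `1 ≤ ℓ₂ ≤ b₂`. -/
theorem two_locations_marginal_Y2
    (lam : Fin 2 → ℝ) (hlam : ∀ j, 0 < lam j)
    (b : Fin 2 → ℕ) (hb : ∀ j, 1 ≤ b j) (hb12 : b 1 ≤ b 0)
    (ν : ℝ) (hν : 0 < ν)
    (θ : (Fin 2 → ℕ) → ℝ)
    (hθnn : ∀ k : Fin 2 → ℕ, (∀ j, k j ≤ b j) → 0 ≤ θ k)
    (hbal : ReducedBalance lam b ν θ)
    (hmass : ∑ k ∈ Kfin b, θ k = 1) :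
    ∀ ℓ₂ : ℕ, 1 ≤ ℓ₂ → ℓ₂ ≤ b 1 →
      (∑ k₁ ∈ Finset.range (b 0 + 1), θ ![k₁, ℓ₂]) * lam 1
        = θ ![b 0 - b 1 + ℓ₂ - 1, ℓ₂ - 1] * (ν / 2)
          + (∑ k₁ ∈ Finset.Icc (b 0 - b 1 + ℓ₂) (b 0), θ ![k₁, ℓ₂ - 1]) * ν :=
  two_locations_marginal_Y2_general lam b hb12 ν θ hbal
end
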